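/- arXiv:1207.2864 — 7 statements merged into one kernel-verified Lean document; each statement's English description precedes it below -/
import Mathlib

section
/- Let A and B be invertible positive bounded linear operators on a complex Hilbert space H and let m > 0 be a real number such that A - B ≥ m·I. Then B⁻¹ - A⁻¹ ≥ (m / ((‖A‖ - m)·‖A‖))·I. -/
/-!
From `B + m ≤ A ≤ ‖A‖` we get `m ≥ (m / ‖A‖) A`, hence `B ≤ c A` with `c = 1 - m / ‖A‖`,
which is positive because `B ≤ (‖A‖ - m)` and `B` is invertible.
Operator monotonicity of inversion turns this into `B⁻¹ ≥ c⁻¹ A⁻¹`, so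
`B⁻¹ - A⁻¹ ≥ (c⁻¹ - 1) A⁻¹ ≥ (c⁻¹ - 1) ‖A‖⁻¹`, and `(c⁻¹ - 1) ‖A‖⁻¹ = m / ((‖A‖ - m) ‖A‖)`.
-/

namespace Ring

theorem inverse_smul {𝕜 R : Type*} [Field 𝕜] [Ring R] [Algebra 𝕜 R] (c : 𝕜) (a : R) :
    Ring.inverse (c • a) = c⁻¹ • Ring.inverse a := by
  rcases eq_or_ne c 0 with rfl | hc
  · simp
  by_cases ha : IsUnit a
  · have hca : IsUnit (c • a) := (isUnit_smul_iff (Units.mk0 c hc) a).2 ha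
    have hmul : c • a * c⁻¹ • Ring.inverse a = 1 := by
      rw [smul_mul_smul_comm, mul_inv_cancel₀ hc, one_smul, Ring.mul_inverse_cancel a ha]
    calc Ring.inverse (c • a)
        = Ring.inverse (c • a) * (c • a * c⁻¹ • Ring.inverse a) := by rw [hmul, mul_one]
      _ = c⁻¹ • Ring.inverse a := Ring.inverse_mul_cancel_left _ _ hca
  · have hca : ¬IsUnit (c • a) := by rwa [← isUnit_smul_iff (Units.mk0 c hc) a] at ha
    rw [Ring.inverse_non_unit _ ha, Ring.inverse_non_unit _ hca, smul_zero]

end Ring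

section CStarAlgebra

variable {A : Type*} [CStarAlgebra A] [PartialOrder A] [StarOrderedRing A]

theorem IsSelfAdjoint.le_norm_smul_one {a : A} (ha : IsSelfAdjoint a) :
    a ≤ ‖a‖ • (1 : A) := by
  simpa [Algebra.algebraMap_eq_smul_one] using ha.le_algebraMap_norm_self

theorem IsStrictlyPositive.pos_of_le_smul_one [Nontrivial A] {b : A} (hb : IsStrictlyPositive b)
    {r : ℝ} (h : b ≤ r • (1 : A)) : 0 < r := by
  by_contra! hr
  have hb0 : b = 0 :=
    le_antisymm (h.trans (smul_nonpos_of_nonpos_of_nonneg hr zero_le_one)) hb.nonneg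
  exact not_isUnit_zero (hb0 ▸ hb.isUnit)

theorem IsStrictlyPositive.inv_norm_smul_one_le_ringInverse {a : A} (ha : IsStrictlyPositive a) :
    ‖a‖⁻¹ • (1 : A) ≤ Ring.inverse a := by
  simpa [Ring.inverse_smul] using
    CStarAlgebra.ringInverse_le_ringInverse (IsSelfAdjoint.of_nonneg ha.nonneg).le_norm_smul_one ha

theorem IsSelfAdjoint.le_smul_of_add_smul_one_le {a b : A} (ha : IsSelfAdjoint a) {m : ℝ}
    (hm : 0 ≤ m) (h : b + m • 1 ≤ a) : b ≤ (1 - m / ‖a‖) • a := by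
  have : (m / ‖a‖) • a ≤ m • (1 : A) := by
    rcases eq_or_ne ‖a‖ 0 with h0 | h0
    · simpa [h0] using smul_nonneg hm zero_le_one
    calc (m / ‖a‖) • a ≤ (m / ‖a‖) • ‖a‖ • (1 : A) :=
          smul_le_smul_of_nonneg_left ha.le_norm_smul_one (by positivity)
      _ = m • 1 := by rw [smul_smul, div_mul_cancel₀ m h0]
  calc b ≤ a - m • 1 := le_sub_iff_add_le.2 h
    _ ≤ a - (m / ‖a‖) • a := sub_le_sub_left this a
    _ = (1 - m / ‖a‖) • a := by rw [sub_smul, one_smul]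

theorem IsStrictlyPositive.smul_one_le_ringInverse_sub_ringInverse {a b : A}
    (hb : IsStrictlyPositive b) {m : ℝ} (hm : 0 < m) (h : m • 1 ≤ a - b) :
    (m / ((‖a‖ - m) * ‖a‖)) • (1 : A) ≤ Ring.inverse b - Ring.inverse a := by
  nontriviality A
  have hba : b + m • 1 ≤ a := le_sub_iff_add_le'.1 h
  have ha : IsStrictlyPositive a :=
    hb.of_le ((le_add_of_nonneg_right (smul_nonneg hm.le zero_le_one)).trans hba)
  have ha_sa : IsSelfAdjoint a := .of_nonneg ha.nonneg
  have hma : 0 < ‖a‖ - m := hb.pos_of_le_smul_one <| by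
    rw [sub_smul]
    exact le_sub_iff_add_le.2 (hba.trans ha_sa.le_norm_smul_one)
  have hna : 0 < ‖a‖ := hm.trans (sub_pos.1 hma)
  set c := 1 - m / ‖a‖ with hc
  have hc_inv : c⁻¹ - 1 = m / (‖a‖ - m) := by
    rw [hc, one_sub_div hna.ne', inv_div, div_sub_one hma.ne', sub_sub_cancel]
  have hinv : c⁻¹ • Ring.inverse a ≤ Ring.inverse b := by
    simpa [Ring.inverse_smul] using
      CStarAlgebra.ringInverse_le_ringInverse (ha_sa.le_smul_of_add_smul_one_le hm.le hba) hb
  calc (m / ((‖a‖ - m) * ‖a‖)) • (1 : A) = (c⁻¹ - 1) • ‖a‖⁻¹ • (1 : A) := by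
        rw [smul_smul, hc_inv, div_mul_eq_div_div, div_eq_mul_inv]
    _ ≤ (c⁻¹ - 1) • Ring.inverse a :=
        smul_le_smul_of_nonneg_left ha.inv_norm_smul_one_le_ringInverse (by rw [hc_inv]; positivity)
    _ = c⁻¹ • Ring.inverse a - Ring.inverse a := by rw [sub_smul, one_smul]
    _ ≤ Ring.inverse b - Ring.inverse a := sub_le_sub_right hinv _

end CStarAlgebra

theorem inv_sub_inv_ge_of_sub_ge_smul_one_general
    {H : Type*} [NormedAddCommGroup H] [InnerProductSpace ℂ H] [CompleteSpace H]
    (A B : H →L[ℂ] H) (hB : 0 ≤ B) (hBu : IsUnit B)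
    (m : ℝ) (hm : 0 < m) (h : m • (1 : H →L[ℂ] H) ≤ A - B) :
    (m / ((‖A‖ - m) * ‖A‖)) • (1 : H →L[ℂ] H) ≤ Ring.inverse B - Ring.inverse A :=
  IsStrictlyPositive.smul_one_le_ringInverse_sub_ringInverse ⟨hB, hBu⟩ hm h

/-- **Lemma 1 (Moslehian–Najafi).** If `A, B` are invertible positive operators on a complex
Hilbert space with `A - B ≥ m·I` for some `m > 0`, then
`B⁻¹ - A⁻¹ ≥ (m / ((‖A‖ - m)·‖A‖))·I`. -/
theorem inv_sub_inv_ge_of_sub_ge_smul_one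
    {H : Type*} [NormedAddCommGroup H] [InnerProductSpace ℂ H] [CompleteSpace H]
    (A B : H →L[ℂ] H) (hA : 0 ≤ A) (hB : 0 ≤ B) (hAu : IsUnit A) (hBu : IsUnit B)
    (m : ℝ) (hm : 0 < m) (h : m • (1 : H →L[ℂ] H) ≤ A - B) :
    (m / ((‖A‖ - m) * ‖A‖)) • (1 : H →L[ℂ] H) ≤ Ring.inverse B - Ring.inverse A :=
  inv_sub_inv_ge_of_sub_ge_smul_one_general A B hB hBu m hm h
end

section
/- Let A be a positive invertible bounded linear operator on a complex Hilbert space H and let m > 0 be a real number such that A - m·I is positive and invertible. Then (A - m·I)⁻¹ ≥ A⁻¹ + (m / ((‖A‖ - m)·‖A‖))·I. -/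
/-! The spectrum of `A` lies in `(m, ‖A‖]`, and on that interval
`(x - m)⁻¹ - x⁻¹ = m / ((x - m) * x) ≥ m / ((‖A‖ - m) * ‖A‖)`. Both sides of the claim are
images of `A` under the continuous functional calculus, whose monotonicity lifts this scalar
inequality to the operator inequality. -/

lemma spectrum.sub_mem_sub_algebraMap {R A : Type*} [CommRing R] [Ring A] [Algebra R A] {a : A}
    {x : R} (hx : x ∈ spectrum R a) (m : R) : x - m ∈ spectrum R (a - algebraMap R A m) := by
  rw [← spectrum.sub_singleton_eq]
  exact Set.sub_mem_sub hx rfl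

lemma div_le_inv_sub_inv_sub {m x M : ℝ} (hm : 0 ≤ m) (hmx : m < x) (hxM : x ≤ M) :
    m / ((M - m) * M) ≤ (x - m)⁻¹ - x⁻¹ := by
  have hx : 0 < x := hm.trans_lt hmx
  have hxm : 0 < x - m := sub_pos.mpr hmx
  calc m / ((M - m) * M) ≤ m / ((x - m) * x) := by gcongr; linarith
    _ = (x - m)⁻¹ - x⁻¹ := by field_simp; ring

section CStarAlgebra

variable {A : Type*} [CStarAlgebra A]

lemma IsSelfAdjoint.ringInverse_sub_algebraMap_eq_cfc {a : A} (ha : IsSelfAdjoint a) {m : ℝ}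
    (h : IsUnit (a - algebraMap ℝ A m)) :
    Ring.inverse (a - algebraMap ℝ A m) = cfc (fun x : ℝ ↦ (x - m)⁻¹) a := by
  have hsub : cfc (fun x : ℝ ↦ x - m) a = a - algebraMap ℝ A m := by
    rw [cfc_sub .., cfc_id' ℝ a, cfc_const m a]
  rw [cfc_inv (fun x : ℝ ↦ x - m) a, hsub]
  intro x hx hxm
  exact spectrum.zero_notMem ℝ h (hxm ▸ spectrum.sub_mem_sub_algebraMap hx m)

variable [PartialOrder A] [StarOrderedRing A]

lemma IsSelfAdjoint.le_norm_of_mem_spectrum {a : A} (ha : IsSelfAdjoint a) {x : ℝ}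
    (hx : x ∈ spectrum ℝ a) : x ≤ ‖a‖ :=
  (le_algebraMap_iff_spectrum_le ha).mp ha.le_algebraMap_norm_self x hx

lemma lt_of_mem_spectrum_of_isStrictlyPositive_sub {a : A} {m x : ℝ}
    (h : IsStrictlyPositive (a - algebraMap ℝ A m)) (hx : x ∈ spectrum ℝ a) : m < x :=
  sub_pos.mp (h.spectrum_pos (spectrum.sub_mem_sub_algebraMap hx m))

lemma ringInverse_add_algebraMap_le_ringInverse_sub {a : A} (ha : 0 ≤ a) (hau : IsUnit a)
    {m : ℝ} (hm : 0 ≤ m) (h : IsStrictlyPositive (a - algebraMap ℝ A m)) :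
    Ring.inverse a + algebraMap ℝ A (m / ((‖a‖ - m) * ‖a‖)) ≤
      Ring.inverse (a - algebraMap ℝ A m) := by
  have ha_sa : IsSelfAdjoint a := ha.isSelfAdjoint
  have hspec_gt : ∀ x ∈ spectrum ℝ a, m < x := fun x hx ↦
    lt_of_mem_spectrum_of_isStrictlyPositive_sub h hx
  have hcont_inv : ContinuousOn (fun x : ℝ ↦ x⁻¹) (spectrum ℝ a) :=
    continuousOn_id.inv₀ fun x hx ↦ (hm.trans_lt (hspec_gt x hx)).ne'
  have hcont_inv_sub : ContinuousOn (fun x : ℝ ↦ (x - m)⁻¹) (spectrum ℝ a) :=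
    (continuousOn_id.sub continuousOn_const).inv₀ fun x hx ↦ (sub_pos.2 (hspec_gt x hx)).ne'
  rw [← cfc_ringInverse_id (R := ℝ) a hau, ← cfc_add_const _ _ a hcont_inv,
    ha_sa.ringInverse_sub_algebraMap_eq_cfc h.isUnit]
  refine cfc_mono (fun x hx ↦ ?_) (hcont_inv.add continuousOn_const) hcont_inv_sub
  linarith [div_le_inv_sub_inv_sub hm (hspec_gt x hx) (ha_sa.le_norm_of_mem_spectrum hx)]

end CStarAlgebra

/-- If `A` is a positive invertible operator on a complex Hilbert space and `m > 0` is such that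
`A - m·I` is positive and invertible, then
`(A - m·I)⁻¹ ≥ A⁻¹ + (m / ((‖A‖ - m)·‖A‖))·I`. -/
theorem inverse_sub_smul_one_ge
    {H : Type*} [NormedAddCommGroup H] [InnerProductSpace ℂ H] [CompleteSpace H]
    (A : H →L[ℂ] H) (hA : 0 ≤ A) (hAu : IsUnit A)
    (m : ℝ) (hm : 0 < m)
    (h1 : 0 ≤ A - m • (1 : H →L[ℂ] H)) (h2 : IsUnit (A - m • (1 : H →L[ℂ] H))) :
    Ring.inverse A + (m / ((‖A‖ - m) * ‖A‖)) • (1 : H →L[ℂ] H) ≤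
      Ring.inverse (A - m • (1 : H →L[ℂ] H)) := by
  simp only [← Algebra.algebraMap_eq_smul_one] at h1 h2 ⊢
  exact ringInverse_add_algebraMap_le_ringInverse_sub hA hAu hm.le (h2.isStrictlyPositive h1)
end

section
/- Let A and B be positive bounded linear operators on a complex Hilbert space H, let m > 0 be a real number with A - B ≥ m·I, and let λ > 0. Then A(λ·I + A)⁻¹ - B(λ·I + B)⁻¹ ≥ (λm / ((‖A‖ + λ - m)·(‖A‖ + λ)))·I. -/
/-!
Since `a (l + a)⁻¹ = 1 - l (l + a)⁻¹`, the difference is `l ((l + b)⁻¹ - (l + a)⁻¹)`.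
The inverse is operator antitone and `a ≥ m + b`, so `(l + a)⁻¹ ≤ (l + m + b)⁻¹`; and
`(l + b)⁻¹ - (l + m + b)⁻¹` is the function `t ↦ m / ((l + t) (l + m + t))` of `b`, whose
spectrum lies in `[0, ‖a‖ - m]` because `b ≤ a - m ≤ ‖a‖ - m`.
-/

open Ring

theorem mul_ringInverse_algebraMap_add {R A : Type*} [CommSemiring R] [Ring A] [Algebra R A]
    {r : R} {a : A} (h : IsUnit (algebraMap R A r + a)) :
    a * (algebraMap R A r + a)⁻¹ʳ = 1 - r • (algebraMap R A r + a)⁻¹ʳ := by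
  calc a * (algebraMap R A r + a)⁻¹ʳ
      = (algebraMap R A r + a - algebraMap R A r) * (algebraMap R A r + a)⁻¹ʳ := by
        rw [add_sub_cancel_left]
    _ = 1 - r • (algebraMap R A r + a)⁻¹ʳ := by
        rw [sub_mul, Ring.mul_inverse_cancel _ h, Algebra.smul_def]

theorem div_le_inv_add_sub_inv_add {l m c t : ℝ} (hl : 0 < l) (hm : 0 ≤ m) (ht : 0 ≤ t)
    (htc : t ≤ c) : m / ((l + c) * (l + m + c)) ≤ (l + t)⁻¹ - (l + m + t)⁻¹ := by
  have hc : 0 ≤ c := ht.trans htc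
  rw [inv_sub_inv (by positivity) (by positivity), add_sub_add_right_eq_sub, add_sub_cancel_left]
  gcongr

section CStarAlgebra

variable {A : Type*} [CStarAlgebra A] [PartialOrder A] [StarOrderedRing A]

theorem continuousOn_inv_const_add_spectrum {b : A} (hb : 0 ≤ b) {l : ℝ} (hl : 0 < l) :
    ContinuousOn (fun t : ℝ ↦ (l + t)⁻¹) (spectrum ℝ b) :=
  (continuousOn_const.add continuousOn_id).inv₀ fun _ ht ↦
    (add_pos_of_pos_of_nonneg hl (spectrum_nonneg_of_nonneg hb ht)).ne'

theorem cfc_inv_const_add {b : A} (hb : 0 ≤ b) {l : ℝ} (hl : 0 < l) :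
    cfc (fun t : ℝ ↦ (l + t)⁻¹) b = (algebraMap ℝ A l + b)⁻¹ʳ := by
  have hne : ∀ t ∈ spectrum ℝ b, l + t ≠ 0 := fun t ht ↦
    (add_pos_of_pos_of_nonneg hl (spectrum_nonneg_of_nonneg hb ht)).ne'
  rw [cfc_inv (fun t ↦ l + t) b hne, cfc_const_add l (fun t ↦ t) b, cfc_id' ℝ b]

theorem algebraMap_le_ringInverse_sub_ringInverse {b : A} (hb : 0 ≤ b) {c : ℝ}
    (hbc : b ≤ algebraMap ℝ A c) {l m : ℝ} (hl : 0 < l) (hm : 0 ≤ m) :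
    algebraMap ℝ A (m / ((l + c) * (l + m + c))) ≤
      (algebraMap ℝ A l + b)⁻¹ʳ - (algebraMap ℝ A (l + m) + b)⁻¹ʳ := by
  have hspec : ∀ t ∈ spectrum ℝ b, 0 ≤ t ∧ t ≤ c := fun t ht ↦
    ⟨spectrum_nonneg_of_nonneg hb ht, (le_algebraMap_iff_spectrum_le (a := b)).mp hbc t ht⟩
  have hlm : 0 < l + m := by positivity
  rw [← cfc_inv_const_add hb hl, ← cfc_inv_const_add hb hlm,
    ← cfc_sub _ _ b (continuousOn_inv_const_add_spectrum hb hl)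
      (continuousOn_inv_const_add_spectrum hb hlm)]
  exact algebraMap_le_cfc _ _ b
    (fun t ht ↦ div_le_inv_add_sub_inv_add hl hm (hspec t ht).1 (hspec t ht).2)
    ((continuousOn_inv_const_add_spectrum hb hl).sub (continuousOn_inv_const_add_spectrum hb hlm))

theorem algebraMap_le_mul_ringInverse_sub_mul_ringInverse {a b : A} (hb : 0 ≤ b) {m : ℝ}
    (hm : 0 ≤ m) (hab : algebraMap ℝ A m ≤ a - b) {l : ℝ} (hl : 0 < l) :
    algebraMap ℝ A (l * m / ((‖a‖ + l - m) * (‖a‖ + l))) ≤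
      a * (algebraMap ℝ A l + a)⁻¹ʳ - b * (algebraMap ℝ A l + b)⁻¹ʳ := by
  have hmba : algebraMap ℝ A m + b ≤ a := le_sub_iff_add_le.mp hab
  have ha : 0 ≤ a := (add_nonneg (algebraMap_nonneg A hm) hb).trans hmba
  have hpos {r : ℝ} (hr : 0 < r) {x : A} (hx : 0 ≤ x) :
      IsStrictlyPositive (algebraMap ℝ A r + x) :=
    (isStrictlyPositive_algebraMap hr).add_nonneg hx
  have hbc : b ≤ algebraMap ℝ A (‖a‖ - m) := by
    rw [map_sub]
    exact le_sub_iff_add_le'.mpr (hmba.trans (IsSelfAdjoint.of_nonneg ha).le_algebraMap_norm_self)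
  have hinv : (algebraMap ℝ A l + a)⁻¹ʳ ≤ (algebraMap ℝ A (l + m) + b)⁻¹ʳ :=
    CStarAlgebra.ringInverse_le_ringInverse
      (by rw [map_add, add_assoc]; gcongr)
      (hpos (by positivity) hb)
  rw [mul_ringInverse_algebraMap_add (hpos hl ha).isUnit,
    mul_ringInverse_algebraMap_add (hpos hl hb).isUnit, sub_sub_sub_cancel_left, ← smul_sub]
  calc algebraMap ℝ A (l * m / ((‖a‖ + l - m) * (‖a‖ + l)))
      = l • algebraMap ℝ A (m / ((l + (‖a‖ - m)) * (l + m + (‖a‖ - m)))) := by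
        rw [Algebra.smul_def, ← map_mul]
        congr 1
        ring
    _ ≤ l • ((algebraMap ℝ A l + b)⁻¹ʳ - (algebraMap ℝ A (l + m) + b)⁻¹ʳ) :=
        smul_le_smul_of_nonneg_left (algebraMap_le_ringInverse_sub_ringInverse hb hbc hl hm) hl.le
    _ ≤ l • ((algebraMap ℝ A l + b)⁻¹ʳ - (algebraMap ℝ A l + a)⁻¹ʳ) := by gcongr

end CStarAlgebra

theorem resolvent_expr_sub_ge_general
    {H : Type*} [NormedAddCommGroup H] [InnerProductSpace ℂ H] [CompleteSpace H]
    (A B : H →L[ℂ] H) (hB : 0 ≤ B)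
    (m : ℝ) (hm : 0 < m) (h : m • (1 : H →L[ℂ] H) ≤ A - B)
    (l : ℝ) (hl : 0 < l) :
    (l * m / ((‖A‖ + l - m) * (‖A‖ + l))) • (1 : H →L[ℂ] H) ≤
      A * Ring.inverse (l • (1 : H →L[ℂ] H) + A) -
        B * Ring.inverse (l • (1 : H →L[ℂ] H) + B) := by
  rw [← Algebra.algebraMap_eq_smul_one] at h
  simpa only [Algebra.algebraMap_eq_smul_one] using
    algebraMap_le_mul_ringInverse_sub_mul_ringInverse hB hm.le h hl

/-- If `A, B` are positive operators on a complex Hilbert space with `A - B ≥ m·I` for some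
`m > 0`, then for every `λ > 0`,
`A(λ·I + A)⁻¹ - B(λ·I + B)⁻¹ ≥ (λm / ((‖A‖ + λ - m)·(‖A‖ + λ)))·I`. -/
theorem resolvent_expr_sub_ge
    {H : Type*} [NormedAddCommGroup H] [InnerProductSpace ℂ H] [CompleteSpace H]
    (A B : H →L[ℂ] H) (hA : 0 ≤ A) (hB : 0 ≤ B)
    (m : ℝ) (hm : 0 < m) (h : m • (1 : H →L[ℂ] H) ≤ A - B)
    (l : ℝ) (hl : 0 < l) :
    (l * m / ((‖A‖ + l - m) * (‖A‖ + l))) • (1 : H →L[ℂ] H) ≤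
      A * Ring.inverse (l • (1 : H →L[ℂ] H) + A) -
        B * Ring.inverse (l • (1 : H →L[ℂ] H) + B) :=
  resolvent_expr_sub_ge_general A B hB m hm h l hl
end

section
/- Let 0 < r < 1 and let a > b > 0 be real numbers. Then ∫₀^∞ λ^r / ((λ + a)(λ + b)) dλ = (π / ((a - b)·sin(rπ)))·(a^r - b^r). -/
/-!
Since `a / (x + a) - b / (x + b) = (a - b) x / ((x + a) (x + b))`, the integrand splits as
`(a x^(r-1) / (x + a) - b x^(r-1) / (x + b)) / (a - b)`, and each piece is a Beta integral:
substituting `x = c t / (1 - t)` gives `∫₀^∞ x^(r-1) / (x + c) dx = c^(r-1) B(r, 1 - r)`, and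
`B(r, 1 - r) = Γ(r) Γ(1 - r) = π / sin (π r)` by Euler's reflection formula.
-/

open MeasureTheory Real Set

lemma integral_rpow_sub_one_mul_one_sub_rpow_neg {s : ℝ} (hs0 : 0 < s) (hs1 : s < 1) :
    ∫ t in (0 : ℝ)..1, t ^ (s - 1) * (1 - t) ^ (-s) = π / sin (π * s) := by
  have hbeta : Complex.betaIntegral s (1 - s) =
      ((∫ t in (0 : ℝ)..1, t ^ (s - 1) * (1 - t) ^ (-s) : ℝ) : ℂ) := by
    rw [Complex.betaIntegral, ← intervalIntegral.integral_ofReal]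
    refine intervalIntegral.integral_congr fun t ht => ?_
    rw [uIcc_of_le zero_le_one] at ht
    simp only [Complex.ofReal_mul, Complex.ofReal_cpow ht.1,
      Complex.ofReal_cpow (sub_nonneg.2 ht.2)]
    push_cast
    ring_nf
  have hreflection :=
    Complex.Gamma_mul_Gamma_eq_betaIntegral (s := s) (t := 1 - s) (by simpa) (by simpa)
  rw [Complex.Gamma_mul_Gamma_one_sub, add_sub_cancel, Complex.Gamma_one, one_mul,
    hbeta] at hreflection
  exact_mod_cast hreflection.symm

lemma integral_Ioi_zero_eq_integral_Ioo_comp_div_one_sub {E : Type*} [NormedAddCommGroup E]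
    [NormedSpace ℝ E] {c : ℝ} (hc : 0 < c) (g : ℝ → E) :
    ∫ x in Ioi 0, g x = ∫ t in Ioo 0 1, (c / (1 - t) ^ 2) • g (c * t / (1 - t)) := by
  have hderiv : ∀ t ∈ Ioo (0 : ℝ) 1,
      HasDerivWithinAt (fun t => c * t / (1 - t)) (c / (1 - t) ^ 2) (Ioo 0 1) t := by
    intro t ht
    have h1t : 1 - t ≠ 0 := (sub_pos.2 ht.2).ne'
    refine (HasDerivAt.congr_deriv (((hasDerivAt_id' t).const_mul c).div
      ((hasDerivAt_id' t).const_sub 1) h1t) ?_).hasDerivWithinAt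
    field_simp
    ring
  have hinj : InjOn (fun t => c * t / (1 - t)) (Ioo 0 1) := by
    intro t ht u hu htu
    have h1t : 1 - t ≠ 0 := (sub_pos.2 ht.2).ne'
    have h1u : 1 - u ≠ 0 := (sub_pos.2 hu.2).ne'
    field_simp at htu
    nlinarith
  have himage : (fun t => c * t / (1 - t)) '' Ioo 0 1 = Ioi 0 := by
    ext x
    constructor
    · rintro ⟨t, ht, rfl⟩
      exact div_pos (mul_pos hc ht.1) (sub_pos.2 ht.2)
    · intro hx
      have hx : 0 < x := hx
      refine ⟨x / (x + c), ⟨by positivity, (div_lt_one (by positivity)).2 (by linarith)⟩,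
        ?_⟩
      field_simp
      simp [hc.ne']
  rw [← himage, integral_image_eq_integral_abs_deriv_smul measurableSet_Ioo hderiv hinj]
  refine setIntegral_congr_fun measurableSet_Ioo fun t ht => ?_
  rw [abs_of_pos (by have := sub_pos.2 ht.2; positivity)]

lemma integral_rpow_sub_one_div_add {s c : ℝ} (hs0 : 0 < s) (hs1 : s < 1) (hc : 0 < c) :
    ∫ x in Ioi 0, x ^ (s - 1) / (x + c) = c ^ (s - 1) * (π / sin (π * s)) := by
  rw [integral_Ioi_zero_eq_integral_Ioo_comp_div_one_sub hc,
    ← integral_rpow_sub_one_mul_one_sub_rpow_neg hs0 hs1, ← intervalIntegral.integral_const_mul,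
    intervalIntegral.integral_of_le zero_le_one, integral_Ioc_eq_integral_Ioo]
  refine setIntegral_congr_fun measurableSet_Ioo fun t ⟨ht0, ht1⟩ => ?_
  have h1t : 0 < 1 - t := sub_pos.2 ht1
  have hshift : c * t / (1 - t) + c = c / (1 - t) := by field_simp; ring
  rw [smul_eq_mul, hshift, div_rpow (by positivity) h1t.le, mul_rpow hc.le ht0.le,
    rpow_neg h1t.le, rpow_sub_one hc.ne', rpow_sub_one h1t.ne']
  field_simp

/-- A non-integrable function has Bochner integral `0`, so the nonzero value above already
forces integrability. -/
lemma integrableOn_rpow_sub_one_div_add {s c : ℝ} (hs0 : 0 < s) (hs1 : s < 1) (hc : 0 < c) :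
    IntegrableOn (fun x => x ^ (s - 1) / (x + c)) (Ioi 0) := by
  have hsin : 0 < sin (π * s) := sin_pos_of_pos_of_lt_pi (by positivity) (by nlinarith [pi_pos])
  refine Integrable.of_integral_ne_zero ?_
  rw [integral_rpow_sub_one_div_add hs0 hs1 hc]
  positivity

lemma rpow_div_add_mul_add_eq_sub_div {r a b x : ℝ} (hab : a ≠ b) (hx : x ≠ 0)
    (ha : x + a ≠ 0) (hb : x + b ≠ 0) :
    x ^ r / ((x + a) * (x + b)) =
      (a * (x ^ (r - 1) / (x + a)) - b * (x ^ (r - 1) / (x + b))) / (a - b) := by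
  have hab' : a - b ≠ 0 := sub_ne_zero.2 hab
  rw [rpow_sub_one hx]
  field_simp
  ring

/-- For `0 < r < 1` and reals `a > b > 0`,
`∫₀^∞ λ^r / ((λ + a)(λ + b)) dλ = (π / ((a - b)·sin(rπ)))·(a^r - b^r)`. -/
theorem integral_rpow_div_mul_linear
    (r : ℝ) (hr0 : 0 < r) (hr1 : r < 1) (a b : ℝ) (hb : 0 < b) (hab : b < a) :
    ∫ l in Set.Ioi (0 : ℝ), l ^ r / ((l + a) * (l + b)) =
      (π / ((a - b) * Real.sin (r * π))) * (a ^ r - b ^ r) := by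
  have ha : 0 < a := hb.trans hab
  have hsplit : ∀ x ∈ Ioi (0 : ℝ), x ^ r / ((x + a) * (x + b)) =
      (a * (x ^ (r - 1) / (x + a)) - b * (x ^ (r - 1) / (x + b))) / (a - b) :=
    fun x (hx : 0 < x) =>
      rpow_div_add_mul_add_eq_sub_div hab.ne' hx.ne' (by positivity) (by positivity)
  rw [setIntegral_congr_fun measurableSet_Ioi hsplit, integral_div, integral_sub,
    integral_const_mul, integral_const_mul, integral_rpow_sub_one_div_add hr0 hr1 ha,
    integral_rpow_sub_one_div_add hr0 hr1 hb, rpow_sub_one ha.ne', rpow_sub_one hb.ne',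
    mul_comm r π]
  · have hab' : a - b ≠ 0 := sub_ne_zero.2 hab.ne'
    field_simp
  · exact (integrableOn_rpow_sub_one_div_add hr0 hr1 ha).const_mul a
  · exact (integrableOn_rpow_sub_one_div_add hr0 hr1 hb).const_mul b
end

section
/- Let A and B be self-adjoint bounded linear operators on a complex Hilbert space H whose spectra are contained in (-1, 1), let m > 0 satisfy A - B ≥ m·I, and let 0 < λ < 1. Then I - λA and I - λB are positive and invertible, and (1/λ)·((I - λA)⁻¹ - (I - λB)⁻¹) ≥ (m / ((‖I - λB‖ - λm)·‖I - λB‖))·I. -/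
/-!
With `S = 1 - λA` and `T = 1 - λB`, the hypotheses give `S + λm ≤ T` with `S` strictly positive.
Since inversion is operator antitone, `S⁻¹ ≥ (T - λm)⁻¹`, and `(T - λm)⁻¹ - T⁻¹` is the function
`x ↦ λm / ((x - λm) x)` of `T`; on the spectrum of `T`, which lies in `(λm, ‖T‖]`, this function
is at least `λm / ((‖T‖ - λm) ‖T‖)`.
-/

lemma div_le_inv_sub_inv_of_lt_of_le {c x n : ℝ} (hc : 0 ≤ c) (hcx : c < x) (hxn : x ≤ n) :
    c / ((n - c) * n) ≤ (x - c)⁻¹ - x⁻¹ := by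
  have hx : 0 < x := hc.trans_lt hcx
  have hxc : 0 < x - c := sub_pos.mpr hcx
  calc c / ((n - c) * n) ≤ c / ((x - c) * x) := by gcongr; linarith
    _ = (x - c)⁻¹ - x⁻¹ := by field_simp; ring

namespace CStarAlgebra

open Ring

variable {A : Type*} [CStarAlgebra A] [PartialOrder A] [StarOrderedRing A]

lemma isStrictlyPositive_one_sub_smul {a : A} (ha : IsSelfAdjoint a)
    (hspec : spectrum ℝ a ⊆ Set.Ioo (-1) 1) {l : ℝ} (hl0 : 0 ≤ l) (hl1 : l ≤ 1) :
    IsStrictlyPositive (1 - l • a) := by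
  have hcfc : cfc (fun x : ℝ ↦ 1 - l * x) a = 1 - l • a := by
    rw [cfc_sub .., cfc_const_one .., cfc_const_mul_id ..]
  rw [← hcfc, StarOrderedRing.isStrictlyPositive_iff_spectrum_pos (R := ℝ) _ (cfc_predicate _ a),
    cfc_map_spectrum ..]
  rintro _ ⟨x, hx, rfl⟩
  obtain ⟨h1, h2⟩ := hspec hx
  nlinarith

lemma algebraMap_le_ringInverse_sub_ringInverse {a b : A} {c : ℝ} (ha : IsStrictlyPositive a)
    (hc : 0 ≤ c) (hab : a + algebraMap ℝ A c ≤ b) :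
    algebraMap ℝ A (c / ((‖b‖ - c) * ‖b‖)) ≤ a⁻¹ʳ - b⁻¹ʳ := by
  nontriviality A
  have hbc : IsStrictlyPositive (b - algebraMap ℝ A c) := ha.of_le (le_sub_iff_add_le.mpr hab)
  have hb : IsStrictlyPositive b := hbc.of_le (sub_le_self _ (algebraMap_nonneg A hc))
  have hspec : ∀ x ∈ spectrum ℝ b, 0 < x - c := by
    intro x hx
    refine hbc.spectrum_pos ?_
    rw [← spectrum.sub_singleton_eq]
    exact Set.sub_mem_sub hx rfl
  have hcont₁ : ContinuousOn (fun x : ℝ ↦ (x - c)⁻¹) (spectrum ℝ b) :=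
    (continuousOn_id.sub continuousOn_const).inv₀ fun x hx ↦ (hspec x hx).ne'
  have hcont₀ : ContinuousOn (fun x : ℝ ↦ x⁻¹) (spectrum ℝ b) :=
    continuousOn_id.inv₀ fun x hx ↦ (hb.spectrum_pos hx).ne'
  have hres : (b - algebraMap ℝ A c)⁻¹ʳ - b⁻¹ʳ = cfc (fun x : ℝ ↦ (x - c)⁻¹ - x⁻¹) b := by
    have hshift : cfc (fun x : ℝ ↦ x - c) b = b - algebraMap ℝ A c := by
      rw [cfc_sub .., cfc_id' .., cfc_const ..]
    rw [cfc_sub _ _ b hcont₁ hcont₀, cfc_inv (fun x : ℝ ↦ x - c) b fun x hx ↦ (hspec x hx).ne',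
      hshift, cfc_ringInverse_id (a := b) hb.isUnit]
  calc algebraMap ℝ A (c / ((‖b‖ - c) * ‖b‖)) ≤ (b - algebraMap ℝ A c)⁻¹ʳ - b⁻¹ʳ := by
        rw [hres]
        refine algebraMap_le_cfc _ _ b (fun x hx ↦ ?_) (hcont₁.sub hcont₀)
        exact div_le_inv_sub_inv_of_lt_of_le hc (sub_pos.mp (hspec x hx))
          ((Real.le_norm_self x).trans (spectrum.norm_le_norm_of_mem hx))
    _ ≤ a⁻¹ʳ - b⁻¹ʳ := by
        gcongr
        exact le_sub_iff_add_le.mpr hab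

end CStarAlgebra

open CStarAlgebra in
/-- Let `A, B` be self-adjoint operators on a complex Hilbert space with spectra in `(-1, 1)`,
let `m > 0` satisfy `A - B ≥ m·I`, and let `0 < λ < 1`. Then `I - λA` and `I - λB` are positive
and invertible and
`(1/λ)·((I - λA)⁻¹ - (I - λB)⁻¹) ≥ (m / ((‖I - λB‖ - λm)·‖I - λB‖))·I`. -/
theorem resolvent_sub_ge_of_pos_lambda
    {H : Type*} [NormedAddCommGroup H] [InnerProductSpace ℂ H] [CompleteSpace H]
    (A B : H →L[ℂ] H) (hA : IsSelfAdjoint A) (hB : IsSelfAdjoint B)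
    (hsA : spectrum ℝ A ⊆ Set.Ioo (-1) 1) (hsB : spectrum ℝ B ⊆ Set.Ioo (-1) 1)
    (m : ℝ) (hm : 0 < m) (h : m • (1 : H →L[ℂ] H) ≤ A - B)
    (l : ℝ) (hl0 : 0 < l) (hl1 : l < 1) :
    0 ≤ 1 - l • A ∧ IsUnit (1 - l • A) ∧ 0 ≤ 1 - l • B ∧ IsUnit (1 - l • B) ∧
      (m / ((‖(1 : H →L[ℂ] H) - l • B‖ - l * m) * ‖(1 : H →L[ℂ] H) - l • B‖)) •
          (1 : H →L[ℂ] H) ≤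
        (1 / l) • (Ring.inverse (1 - l • A) - Ring.inverse (1 - l • B)) := by
  have hSpos := isStrictlyPositive_one_sub_smul hA hsA hl0.le hl1.le
  have hTpos := isStrictlyPositive_one_sub_smul hB hsB hl0.le hl1.le
  refine ⟨hSpos.nonneg, hSpos.isUnit, hTpos.nonneg, hTpos.isUnit, ?_⟩
  have hgap : 1 - l • A + algebraMap ℝ (H →L[ℂ] H) (l * m) ≤ 1 - l • B := by
    have hlAB : (l * m) • (1 : H →L[ℂ] H) ≤ l • A - l • B := by
      rw [← smul_smul, ← smul_sub]
      exact smul_le_smul_of_nonneg_left h hl0.le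
    calc 1 - l • A + algebraMap ℝ (H →L[ℂ] H) (l * m) ≤ 1 - l • A + (l • A - l • B) := by
          rw [Algebra.algebraMap_eq_smul_one]
          gcongr
      _ = 1 - l • B := by abel
  have key := smul_le_smul_of_nonneg_left
    (algebraMap_le_ringInverse_sub_ringInverse hSpos (mul_nonneg hl0.le hm.le) hgap)
    (one_div_nonneg.mpr hl0.le)
  rw [Algebra.algebraMap_eq_smul_one, smul_smul] at key
  convert key using 2
  field_simp
end

section
/- Let A and B be self-adjoint bounded linear operators on a complex Hilbert space H whose spectra are contained in (-1, 1), let m > 0 satisfy A - B ≥ m·I, and let -1 < λ < 0. Then I - λA and I - λB are positive and invertible, and (1/λ)·((I - λA)⁻¹ - (I - λB)⁻¹) ≥ (m / ((‖I - λA‖ + λm)·‖I - λA‖))·I. -/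
/-!
Put `T = 1 - λA`, `S = 1 - λB` and `μ = -λm > 0`. The spectral bound `A, B ≥ -1` gives
`T, S ≥ 1 + λ > 0`, and `A - B ≥ m` gives `S + μ ≤ T`. Since also `S ≤ T - μ ≤ N := ‖T‖ - μ`,
we have `(μ / N) S ≤ μ`, hence `(‖T‖ / N) S ≤ T`. Operator monotonicity of inversion on strictly
positive elements then yields `T⁻¹ ≤ (N / ‖T‖) S⁻¹` and `N⁻¹ ≤ S⁻¹`, so
`S⁻¹ - T⁻¹ ≥ (μ / ‖T‖) S⁻¹ ≥ μ / (‖T‖ N)`; multiplying by `-1/λ > 0` gives the claim.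
-/

section

variable {𝕜 A : Type*} [Field 𝕜] [Ring A] [Algebra 𝕜 A]

theorem Ring.inverse_algebraMap (c : 𝕜) :
    Ring.inverse (algebraMap 𝕜 A c) = algebraMap 𝕜 A c⁻¹ := by
  obtain rfl | hc := eq_or_ne c 0
  · simp
  · exact Ring.inverse_unit ((Units.mk0 c hc).map (algebraMap 𝕜 A).toMonoidHom)

theorem Ring.inverse_smul_s13 (c : 𝕜) (a : A) :
    Ring.inverse (c • a) = c⁻¹ • Ring.inverse a := by
  rw [Algebra.smul_def, Algebra.smul_def,
    Ring.mul_inverse_rev' (Algebra.commute_algebraMap_left c a), Ring.inverse_algebraMap,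
    Algebra.commutes]

end

section

variable {A : Type*} [CStarAlgebra A] [PartialOrder A] [StarOrderedRing A]

lemma isStrictlyPositive_one_sub_smul {a : A} (ha : IsSelfAdjoint a)
    (hspec : ∀ x ∈ spectrum ℝ a, -1 ≤ x) {l : ℝ} (hl : -1 < l) (hl0 : l ≤ 0) :
    IsStrictlyPositive (1 - l • a) := by
  have ha_ge : algebraMap ℝ A (-1) ≤ a := (algebraMap_le_iff_le_spectrum ha).2 hspec
  have hbound : algebraMap ℝ A (1 + l) ≤ 1 - l • a := by
    have : 1 - l • a - algebraMap ℝ A (1 + l) = (-l) • (a - algebraMap ℝ A (-1)) := by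
      simp only [Algebra.algebraMap_eq_smul_one]; module
    rw [← sub_nonneg, this]
    exact smul_nonneg (neg_nonneg.2 hl0) (sub_nonneg.2 ha_ge)
  exact (isStrictlyPositive_algebraMap (by linarith)).of_le hbound

lemma algebraMap_le_ringInverse_sub_ringInverse_s13 {s t : A} (hs : IsStrictlyPositive s) {μ : ℝ}
    (hμ : 0 ≤ μ) (hst : s + algebraMap ℝ A μ ≤ t) :
    algebraMap ℝ A (μ / (‖t‖ * (‖t‖ - μ))) ≤ Ring.inverse s - Ring.inverse t := by
  nontriviality A
  set N := ‖t‖ - μ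
  have hsN : s ≤ algebraMap ℝ A N := by
    have ht : IsSelfAdjoint t :=
      .of_nonneg (hs.nonneg.trans ((le_add_of_nonneg_right (algebraMap_nonneg A hμ)).trans hst))
    rw [map_sub]
    exact le_sub_iff_add_le.2 (hst.trans ht.le_algebraMap_norm_self)
  have hN : 0 < N := by
    obtain ⟨r, hr, hrs⟩ :=
      (CFC.exists_pos_algebraMap_le_iff hs.isSelfAdjoint).2 fun x hx ↦ hs.spectrum_pos hx
    exact hr.trans_le (algebraMap_le_algebraMap.1 (hrs.trans hsN))
  have ht_pos : 0 < ‖t‖ := by linarith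
  have hscale : (‖t‖ / N) • s ≤ t := calc
    (‖t‖ / N) • s = s + (μ / N) • s := by
      match_scalars
      field_simp
      ring
    _ ≤ s + (μ / N) • algebraMap ℝ A N := by gcongr
    _ = s + algebraMap ℝ A μ := by rw [Algebra.smul_def, ← map_mul, div_mul_cancel₀ _ hN.ne']
    _ ≤ t := hst
  have ht_inv : Ring.inverse t ≤ (N / ‖t‖) • Ring.inverse s := by
    simpa [Ring.inverse_smul_s13] using CStarAlgebra.ringInverse_le_ringInverse hscale (hs.smul (by positivity))
  have hs_inv : algebraMap ℝ A N⁻¹ ≤ Ring.inverse s := by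
    simpa [Ring.inverse_algebraMap] using CStarAlgebra.ringInverse_le_ringInverse hsN hs
  calc algebraMap ℝ A (μ / (‖t‖ * N)) = (μ / ‖t‖) • algebraMap ℝ A N⁻¹ := by
        rw [Algebra.smul_def, ← map_mul]; congr 1; field_simp
    _ ≤ (μ / ‖t‖) • Ring.inverse s := by gcongr
    _ = Ring.inverse s - (N / ‖t‖) • Ring.inverse s := by
        match_scalars
        field_simp
        ring
    _ ≤ Ring.inverse s - Ring.inverse t := sub_le_sub_left ht_inv _

end

/-- Let `A, B` be self-adjoint operators on a complex Hilbert space with spectra in `(-1, 1)`,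
let `m > 0` satisfy `A - B ≥ m·I`, and let `-1 < λ < 0`. Then `I - λA` and `I - λB` are positive
and invertible and
`(1/λ)·((I - λA)⁻¹ - (I - λB)⁻¹) ≥ (m / ((‖I - λA‖ + λm)·‖I - λA‖))·I`. -/
theorem resolvent_sub_ge_of_neg_lambda
    {H : Type*} [NormedAddCommGroup H] [InnerProductSpace ℂ H] [CompleteSpace H]
    (A B : H →L[ℂ] H) (hA : IsSelfAdjoint A) (hB : IsSelfAdjoint B)
    (hsA : spectrum ℝ A ⊆ Set.Ioo (-1) 1) (hsB : spectrum ℝ B ⊆ Set.Ioo (-1) 1)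
    (m : ℝ) (hm : 0 < m) (h : m • (1 : H →L[ℂ] H) ≤ A - B)
    (l : ℝ) (hl0 : -1 < l) (hl1 : l < 0) :
    0 ≤ 1 - l • A ∧ IsUnit (1 - l • A) ∧ 0 ≤ 1 - l • B ∧ IsUnit (1 - l • B) ∧
      (m / ((‖(1 : H →L[ℂ] H) - l • A‖ + l * m) * ‖(1 : H →L[ℂ] H) - l • A‖)) •
          (1 : H →L[ℂ] H) ≤
        (1 / l) • (Ring.inverse (1 - l • A) - Ring.inverse (1 - l • B)) := by
  set T := (1 : H →L[ℂ] H) - l • A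
  set S := (1 : H →L[ℂ] H) - l • B
  have hT : IsStrictlyPositive T :=
    isStrictlyPositive_one_sub_smul hA (fun x hx ↦ (hsA hx).1.le) hl0 hl1.le
  have hS : IsStrictlyPositive S :=
    isStrictlyPositive_one_sub_smul hB (fun x hx ↦ (hsB hx).1.le) hl0 hl1.le
  have hST : S + algebraMap ℝ _ (-l * m) ≤ T := calc
    S + algebraMap ℝ _ (-l * m) = S + (-l) • (m • 1) := by
      rw [Algebra.algebraMap_eq_smul_one, smul_smul]
    _ ≤ S + (-l) • (A - B) := by gcongr; linarith
    _ = T := by module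
  have key := algebraMap_le_ringInverse_sub_ringInverse_s13 hS
    (mul_nonneg (neg_nonneg.2 hl1.le) hm.le) hST
  have hscalar : m / ((‖T‖ + l * m) * ‖T‖) = -(1 / l) * (-l * m / (‖T‖ * (‖T‖ - -l * m))) := by
    have hl : l ≠ 0 := hl1.ne
    field_simp
    ring
  refine ⟨hT.nonneg, hT.isUnit, hS.nonneg, hS.isUnit, ?_⟩
  calc _ = (-(1 / l)) • algebraMap ℝ (H →L[ℂ] H) (-l * m / (‖T‖ * (‖T‖ - -l * m))) := by
        rw [← Algebra.algebraMap_eq_smul_one, hscalar, map_mul, ← Algebra.smul_def]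
    _ ≤ (-(1 / l)) • (Ring.inverse S - Ring.inverse T) :=
        smul_le_smul_of_nonneg_left key (neg_nonneg.2 (one_div_neg.2 hl1).le)
    _ = (1 / l) • (Ring.inverse T - Ring.inverse S) := by module
end

section
/- Let A and B be bounded linear operators on a complex Hilbert space H with B positive and A - B positive and invertible, and let 0 < r ≤ 1. Then A^r - B^r is positive and invertible. -/
/-! Since `A - B` is strictly positive, `B + ε ≤ A` for some scalar `ε > 0`. Operator monotonicity
of `t ↦ t ^ r` (Löwner–Heinz) gives `(B + ε) ^ r ≤ A ^ r`, and `(B + ε) ^ r - B ^ r` is the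
functional calculus of `t ↦ (t + ε) ^ r - t ^ r`, which is strictly positive on the spectrum
of `B`. -/

open CFC

section

variable {A : Type*} [CStarAlgebra A] [PartialOrder A] [StarOrderedRing A]

lemma isStrictlyPositive_add_algebraMap_rpow_sub_rpow {b : A} (hb : 0 ≤ b) {ε r : ℝ}
    (hε : 0 < ε) (hr : 0 < r) : IsStrictlyPositive ((b + algebraMap ℝ A ε) ^ r - b ^ r) := by
  have hspec : ∀ x ∈ spectrum ℝ b, 0 ≤ x := fun x hx => spectrum_nonneg_of_nonneg hb hx
  have hpow : Continuous fun x : ℝ => x ^ r := Real.continuous_rpow_const hr.le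
  have hshift : Continuous fun x : ℝ => (x + ε) ^ r := hpow.comp (continuous_add_const ε)
  have hcfc : (b + algebraMap ℝ A ε) ^ r - b ^ r = cfc (fun x : ℝ => (x + ε) ^ r - x ^ r) b := by
    rw [cfc_sub _ _ b hshift.continuousOn hpow.continuousOn,
      ← rpow_eq_cfc_real hb, ← cfc_rpow (fun x hx => by linarith [hspec x hx]),
      cfc_add_const ε (fun x : ℝ => x) b, cfc_id' ℝ b]
  rw [hcfc, cfc_isStrictlyPositive_iff (fun x : ℝ => (x + ε) ^ r - x ^ r) b
    (hshift.sub hpow).continuousOn]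
  exact fun x hx => sub_pos.2 (Real.rpow_lt_rpow (hspec x hx) (by linarith) hr)

lemma IsStrictlyPositive.rpow_sub_rpow {a b : A} (hab : IsStrictlyPositive (a - b)) (hb : 0 ≤ b)
    {r : ℝ} (hr0 : 0 < r) (hr1 : r ≤ 1) : IsStrictlyPositive (a ^ r - b ^ r) := by
  nontriviality A
  obtain ⟨ε, hε, hεle⟩ :=
    (exists_pos_algebraMap_le_iff hab.isSelfAdjoint).2 fun x hx => hab.spectrum_pos hx
  have hle : b + algebraMap ℝ A ε ≤ a := by rwa [← le_sub_iff_add_le']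
  refine (isStrictlyPositive_add_algebraMap_rpow_sub_rpow hb hε hr0).of_le ?_
  gcongr
  exact ⟨hr0.le, hr1⟩

end

/-- **Kwong-type corollary.** If `A > B ≥ 0` (i.e. `B` is positive and `A - B` is positive and
invertible) on a complex Hilbert space, then `A^r - B^r` is positive and invertible for every
`0 < r ≤ 1`. -/
theorem rpow_sub_rpow_pos_invertible
    {H : Type*} [NormedAddCommGroup H] [InnerProductSpace ℂ H] [CompleteSpace H]
    (A B : H →L[ℂ] H) (hB : 0 ≤ B) (hAB : 0 ≤ A - B) (hABu : IsUnit (A - B))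
    (r : ℝ) (hr0 : 0 < r) (hr1 : r ≤ 1) :
    0 ≤ CFC.rpow A r - CFC.rpow B r ∧ IsUnit (CFC.rpow A r - CFC.rpow B r) := by
  have h := (hABu.isStrictlyPositive hAB).rpow_sub_rpow hB hr0 hr1
  exact ⟨h.nonneg, h.isUnit⟩
end
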